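/- Let ω > 0 and k ≠ 0, and let f = k·X. Then g_f = ω²·X + (k²/9)·X³, and the Chiellini identity g_f′·f − g_f·f′ + c·f³ = 0 holds as polynomials with c = −2/9; moreover the real numbers ℓ satisfying ℓ(ℓ+1) = −2/9 are exactly ℓ = −1/3 and ℓ = −2/3. -/

import Mathlib

open Polynomial

/-!
Since `I' = k X²` and `I(0) = 0`, we get `I = (k/3) X³`, so `X³ g = ω² X⁴ + (k²/9) X⁶` and
cancelling `X³` gives `g = ω² X + (k²/9) X³`. For `f = k X` and `g = a X + b X³` the Wronskian-type
expression `g' f − g f'` equals `2 b k X³`, which `c f³ = c k³ X³` cancels once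
`2 b + c k² = 0`; with `b = k²/9` this gives `c = −2/9`. Finally
`ℓ (ℓ + 1) + 2/9 = (ℓ + 1/3)(ℓ + 2/3)`.
-/

namespace Polynomial

theorem eq_of_derivative_eq_of_eval_zero_eq {R : Type*} [Ring R] [IsAddTorsionFree R]
    {p q : R[X]} (h : derivative p = derivative q) (h0 : p.eval 0 = q.eval 0) : p = q := by
  have hpq := eq_C_of_derivative_eq_zero (p := p - q) (by rw [derivative_sub, h, sub_self])
  rwa [coeff_zero_eq_eval_zero, eval_sub, h0, sub_self, C_0, sub_eq_zero] at hpq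

theorem eq_C_div_three_mul_X_pow_three {K : Type*} [Field K] [CharZero K] {I : K[X]} {k : K}
    (h0 : I.eval 0 = 0) (hI : derivative I = X * (C k * X)) : I = C (k / 3) * X ^ 3 := by
  refine eq_of_derivative_eq_of_eval_zero_eq ?_ (by simp [h0])
  rw [hI, derivative_C_mul_X_pow, Nat.cast_ofNat, div_mul_cancel₀ k three_ne_zero]
  ring

section Chiellini

variable {R : Type*} [CommRing R]

def ChielliniIdentity (f g : R[X]) (c : R) : Prop :=
  derivative g * f - g * derivative f + C c * f ^ 3 = 0

theorem chielliniIdentity_C_mul_X {a b c k : R} (h : 2 * b + c * k ^ 2 = 0) :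
    ChielliniIdentity (C k * X) (C a * X + C b * X ^ 3) c := by
  calc _ = C ((2 * b + c * k ^ 2) * k) * X ^ 3 := by
        simp only [derivative_C_mul_X, derivative_C_mul_X_pow, map_mul, map_add, map_pow,
          map_natCast, map_ofNat]
        ring
    _ = 0 := by rw [h, zero_mul, C_0, zero_mul]

end Chiellini

end Polynomial

theorem mul_add_one_eq_neg_two_ninths_iff {K : Type*} [Field K] [CharZero K] (ℓ : K) :
    ℓ * (ℓ + 1) = -2 / 9 ↔ ℓ = -1 / 3 ∨ ℓ = -2 / 3 := by
  have hfactor : ℓ * (ℓ + 1) - -2 / 9 = (ℓ - -1 / 3) * (ℓ - -2 / 3) := by ring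
  rw [← sub_eq_zero, hfactor, mul_eq_zero, sub_eq_zero, sub_eq_zero]

theorem stmt_4_general (ω k : ℝ)
    (f I g : ℝ[X]) (hfdef : f = C k * X)
    (hI0 : I.eval 0 = 0) (hI' : derivative I = X * f)
    (hg : X ^ 3 * g = C (ω ^ 2) * X ^ 4 + I ^ 2) :
    g = C (ω ^ 2) * X + C (k ^ 2 / 9) * X ^ 3 ∧
      derivative g * f - g * derivative f + C (-2 / 9 : ℝ) * f ^ 3 = 0 ∧
      ∀ ℓ : ℝ, ℓ * (ℓ + 1) = -2 / 9 ↔ ℓ = -1 / 3 ∨ ℓ = -2 / 3 := by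
  subst hfdef
  have hI : I = C (k / 3) * X ^ 3 := eq_C_div_three_mul_X_pow_three hI0 hI'
  have hgeq : g = C (ω ^ 2) * X + C (k ^ 2 / 9) * X ^ 3 := by
    refine mul_left_cancel₀ (pow_ne_zero 3 X_ne_zero) ?_
    rw [hg, hI, mul_pow, ← C_pow, div_pow]
    norm_num
    ring
  refine ⟨hgeq, ?_, mul_add_one_eq_neg_two_ninths_iff⟩
  rw [hgeq]
  exact chielliniIdentity_C_mul_X (by ring)

/-- Let `ω > 0`, `k ≠ 0` and `f = k·X`, with `I` the antiderivative of
`X·f` vanishing at `0` and `g` the polynomial with `X³·g = ω²·X⁴ + I²`. Then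
`g = ω²·X + (k²/9)·X³`, the Chiellini identity `g'·f − g·f' + c·f³ = 0` holds with
`c = −2/9`, and the real `ℓ` with `ℓ(ℓ+1) = −2/9` are exactly `ℓ = −1/3` and
`ℓ = −2/3`. -/
theorem stmt_4 (ω k : ℝ) (hω : 0 < ω) (hk : k ≠ 0)
    (f I g : ℝ[X]) (hfdef : f = C k * X)
    (hI0 : I.eval 0 = 0) (hI' : derivative I = X * f)
    (hg : X ^ 3 * g = C (ω ^ 2) * X ^ 4 + I ^ 2) :
    g = C (ω ^ 2) * X + C (k ^ 2 / 9) * X ^ 3 ∧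
      derivative g * f - g * derivative f + C (-2 / 9 : ℝ) * f ^ 3 = 0 ∧
      ∀ ℓ : ℝ, ℓ * (ℓ + 1) = -2 / 9 ↔ ℓ = -1 / 3 ∨ ℓ = -2 / 3 :=
  stmt_4_general ω k f I g hfdef hI0 hI' hg
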